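/- arXiv:2209.12838 — 5 statements merged into one kernel-verified Lean document; each statement's English description precedes it below -/
import Mathlib

section
/- Let w be an element of the subgroup of the orthogonal group of V generated by the reflections {s_{α_j} : j ≠ r} such that w(α_j) is a negative root for every j ≠ r (w is the longest element of the parabolic Weyl group generated by Δ ∖ {α_r}). Then α_r is co-minuscule if and only if w(α_r) = θ. -/
open scoped InnerProductSpace

private lemma sRefl_invol {V : Type*} [NormedAddCommGroup V] [InnerProductSpace ℝ V]
    (b x : V) :
    (x - (2 * ⟪x, b⟫_ℝ / ⟪b, b⟫_ℝ) • b) -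
      (2 * ⟪x - (2 * ⟪x, b⟫_ℝ / ⟪b, b⟫_ℝ) • b, b⟫_ℝ / ⟪b, b⟫_ℝ) • b = x := by
  by_cases hb : b = 0
  · simp [hb]
  · have h : ⟪b, b⟫_ℝ ≠ 0 := fun h => hb (inner_self_eq_zero.mp h)
    have key : 2 * ⟪x - (2 * ⟪x, b⟫_ℝ / ⟪b, b⟫_ℝ) • b, b⟫_ℝ / ⟪b, b⟫_ℝ
        = -(2 * ⟪x, b⟫_ℝ / ⟪b, b⟫_ℝ) := by
      rw [inner_sub_left, real_inner_smul_left]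
      field_simp
      ring
    rw [key, neg_smul, sub_neg_eq_add, sub_add_cancel]

/-- The reflection `s_b : x ↦ x - (2⟪x,b⟫/⟪b,b⟫) • b`, as a permutation of `V`. -/
noncomputable def sRefl {V : Type*} [NormedAddCommGroup V] [InnerProductSpace ℝ V]
    (b : V) : Equiv.Perm V where
  toFun x := x - (2 * ⟪x, b⟫_ℝ / ⟪b, b⟫_ℝ) • b
  invFun x := x - (2 * ⟪x, b⟫_ℝ / ⟪b, b⟫_ℝ) • b
  left_inv x := sRefl_invol b x
  right_inv x := sRefl_invol b x

/-- Let `R` be a finite, reduced, crystallographic, irreducible root system in a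
finite-dimensional real inner product space `V`, let `α : Fin n → V` be a base of `R` with
coefficient functions `coeff`, let `θ ∈ R` be the highest root, and fix an index `r`.
Let `w` be the longest element of the parabolic Weyl group generated by the reflections
`{s_{α j} : j ≠ r}`, i.e. `w` lies in the subgroup generated by these reflections
(in the group of permutations of `V`; its elements are the orthogonal transformations which
are products of these reflections) and `w (α j)` is a negative root for every `j ≠ r`.
Then `α r` is co-minuscule (its coefficient in `θ` equals `1`) iff `w (α r) = θ`. -/
theorem stmt_1 {V : Type*} [NormedAddCommGroup V] [InnerProductSpace ℝ V]
    [FiniteDimensional ℝ V]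
    (R : Finset V) (hR0 : (0 : V) ∉ R)
    -- reflections map `R` into `R`
    (hrefl : ∀ a ∈ R, ∀ b ∈ R, b - (2 * ⟪b, a⟫_ℝ / ⟪a, a⟫_ℝ) • a ∈ R)
    -- crystallographic
    (hcrys : ∀ a ∈ R, ∀ b ∈ R, ∃ k : ℤ, 2 * ⟪b, a⟫_ℝ / ⟪a, a⟫_ℝ = (k : ℝ))
    -- reduced
    (hred : ∀ a ∈ R, ∀ c : ℝ, c • a ∈ R → c = 1 ∨ c = -1)
    -- irreducible
    (hirr : ¬ ∃ R₁ R₂ : Set V, R₁.Nonempty ∧ R₂.Nonempty ∧ R₁ ∪ R₂ = (R : Set V) ∧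
      Disjoint R₁ R₂ ∧ ∀ a ∈ R₁, ∀ b ∈ R₂, ⟪a, b⟫_ℝ = 0)
    -- a base `Δ = {α 1, …, α n}` of `R`
    {n : ℕ} (α : Fin n → V) (hα : ∀ i, α i ∈ R)
    (hli : LinearIndependent ℝ α)
    (hspan : Submodule.span ℝ (Set.range α) = Submodule.span ℝ (R : Set V))
    -- every root is an integer combination of the base, with coefficients all `≥ 0`
    -- (positive root) or all `≤ 0` (negative root)
    (coeff : V → Fin n → ℤ)
    (hcoeff : ∀ b ∈ R, b = ∑ i, (coeff b i : ℝ) • α i ∧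
      ((∀ i, 0 ≤ coeff b i) ∨ (∀ i, coeff b i ≤ 0)))
    -- the highest root `θ`
    (θ : V) (hθ : θ ∈ R)
    (hhigh : ∀ b ∈ R, ∀ i, coeff b i ≤ coeff θ i)
    (r : Fin n)
    -- `w` is the longest element of the parabolic Weyl group generated by `{s_{α j} : j ≠ r}`
    (w : Equiv.Perm V)
    (hw : w ∈ Subgroup.closure {g | ∃ j : Fin n, j ≠ r ∧ g = sRefl (α j)})
    (hwneg : ∀ j : Fin n, j ≠ r →
      w (α j) ∈ R ∧ ∀ i, coeff (w (α j)) i ≤ 0) :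
    coeff θ r = 1 ↔ w (α r) = θ := by
  classical
  set S : Set (Equiv.Perm V) := {g | ∃ j : Fin n, j ≠ r ∧ g = sRefl (α j)} with hS
  -- every element of the closure is linear
  have hlin : ∀ g ∈ Subgroup.closure S, ∀ (c : ℝ) (x y : V),
      g (c • x + y) = c • g x + g y := by
    intro g hg
    induction hg using Subgroup.closure_induction with
    | mem g hgS =>
      obtain ⟨j, hj, rfl⟩ := hgS
      intro c x y
      set b := α j
      show (c • x + y) - (2 * ⟪c • x + y, b⟫_ℝ / ⟪b, b⟫_ℝ) • b =
        c • (x - (2 * ⟪x, b⟫_ℝ / ⟪b, b⟫_ℝ) • b) + (y - (2 * ⟪y, b⟫_ℝ / ⟪b, b⟫_ℝ) • b)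
      rw [inner_add_left, real_inner_smul_left]
      rw [show 2 * (c * ⟪x, b⟫_ℝ + ⟪y, b⟫_ℝ) / ⟪b, b⟫_ℝ
          = c * (2 * ⟪x, b⟫_ℝ / ⟪b, b⟫_ℝ) + 2 * ⟪y, b⟫_ℝ / ⟪b, b⟫_ℝ by ring]
      module
    | one => intro c x y; simp
    | mul a b ha hb iha ihb =>
      intro c x y
      show a (b (c • x + y)) = c • a (b x) + a (b y)
      rw [ihb, iha]
    | inv a ha iha =>
      intro c x y
      apply a.injective
      show a (a⁻¹ (c • x + y)) = a (c • a⁻¹ x + a⁻¹ y)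
      rw [iha, Equiv.Perm.coe_inv, Equiv.apply_symm_apply, Equiv.apply_symm_apply,
        Equiv.apply_symm_apply]
  -- every element of the closure maps `R` into `R`
  have hmemR : ∀ g ∈ Subgroup.closure S, ∀ x ∈ R, g x ∈ R := by
    intro g hg
    induction hg using Subgroup.closure_induction with
    | mem g hgS =>
      obtain ⟨j, hj, rfl⟩ := hgS
      intro x hx
      exact hrefl (α j) (hα j) x hx
    | one => intro x hx; simpa using hx
    | mul a b ha hb iha ihb =>
      intro x hx
      exact iha _ (ihb x hx)
    | inv a ha iha =>
      intro x hx
      have himg : R.image a = R := by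
        apply Finset.eq_of_subset_of_card_le
        · intro y hy
          obtain ⟨z, hz, rfl⟩ := Finset.mem_image.mp hy
          exact iha z hz
        · rw [Finset.card_image_of_injective _ a.injective]
      rw [← himg] at hx
      obtain ⟨z, hz, rfl⟩ := Finset.mem_image.mp hx
      simpa using hz
  -- every element of the closure moves vectors only within span of the other simple roots
  set M : Submodule ℝ V := Submodule.span ℝ (α '' {j | j ≠ r}) with hM
  have hmove : ∀ g ∈ Subgroup.closure S, ∀ x : V, g x - x ∈ M := by
    intro g hg
    induction hg using Subgroup.closure_induction with
    | mem g hgS =>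
      obtain ⟨j, hj, rfl⟩ := hgS
      intro x
      show (x - (2 * ⟪x, α j⟫_ℝ / ⟪α j, α j⟫_ℝ) • α j) - x ∈ M
      have : (x - (2 * ⟪x, α j⟫_ℝ / ⟪α j, α j⟫_ℝ) • α j) - x
          = -((2 * ⟪x, α j⟫_ℝ / ⟪α j, α j⟫_ℝ) • α j) := by abel
      rw [this]
      exact neg_mem (Submodule.smul_mem _ _ (Submodule.subset_span ⟨j, hj, rfl⟩))
    | one => intro x; simp
    | mul a b ha hb iha ihb =>
      intro x
      have : (a * b) x - x = (a (b x) - b x) + (b x - x) := by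
        show a (b x) - x = _; abel
      rw [this]
      exact add_mem (iha _) (ihb _)
    | inv a ha iha =>
      intro x
      have : a⁻¹ x - x = -(a (a⁻¹ x) - a⁻¹ x) := by
        rw [Equiv.Perm.coe_inv, Equiv.apply_symm_apply]; abel
      rw [this]
      exact neg_mem (iha _)
  -- uniqueness of coordinates
  have hli' := Fintype.linearIndependent_iff.mp hli
  have huniq : ∀ c d : Fin n → ℝ, ∑ i, c i • α i = ∑ i, d i • α i → ∀ i, c i = d i := by
    intro c d hcd i
    have h0 : ∑ i, (c i - d i) • α i = 0 := by
      simp only [sub_smul, Finset.sum_sub_distrib, hcd, sub_self]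
    have := hli' (fun i => c i - d i) h0 i
    linarith
  -- the `r`-th coordinate is preserved by elements of the closure
  have hcoeffr : ∀ g ∈ Subgroup.closure S, ∀ x ∈ R, coeff (g x) r = coeff x r := by
    intro g hg x hx
    have hgx : g x ∈ R := hmemR g hg x hx
    have hm : g x - x ∈ M := hmove g hg x
    set e : Fin n → ℝ := fun i => (coeff (g x) i : ℝ) - (coeff x i : ℝ) with he
    have hsum : g x - x = ∑ i, e i • α i := by
      simp only [he, sub_smul, Finset.sum_sub_distrib]
      rw [← (hcoeff _ hgx).1, ← (hcoeff _ hx).1]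
    by_contra hne
    have her : e r ≠ 0 := by
      simp only [he, sub_ne_zero]
      exact_mod_cast fun h => hne (by exact_mod_cast h)
    -- then α r ∈ M, contradicting linear independence
    have hrest : ∑ i ∈ Finset.univ.erase r, e i • α i ∈ M := by
      apply Submodule.sum_mem
      intro i hi
      exact Submodule.smul_mem _ _
        (Submodule.subset_span ⟨i, (Finset.mem_erase.mp hi).1, rfl⟩)
    have hsplit : e r • α r = (g x - x) - ∑ i ∈ Finset.univ.erase r, e i • α i := by
      rw [hsum, ← Finset.add_sum_erase _ _ (Finset.mem_univ r)]
      abel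
    have hαrM : α r ∈ M := by
      have h1 : e r • α r ∈ M := by rw [hsplit]; exact sub_mem hm hrest
      have h2 : (e r)⁻¹ • (e r • α r) ∈ M := Submodule.smul_mem _ _ h1
      rwa [smul_smul, inv_mul_cancel₀ her, one_smul] at h2
    exact hli.notMem_span_image (by simp : r ∉ {j | j ≠ r}) hαrM
  -- `coeff (α r) r = 1`
  have hδ : ∀ i, (coeff (α r) i : ℝ) = if i = r then 1 else 0 := by
    have h1 : ∑ i, (if i = r then (1:ℝ) else 0) • α i = α r := by
      simp [ite_smul]
    exact huniq _ _ ((hcoeff _ (hα r)).1.symm.trans h1.symm)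
  have hαrr : coeff (α r) r = 1 := by
    have := hδ r; simp at this; exact_mod_cast this
  -- map_sum for elements of the closure
  have hmapsum : ∀ g ∈ Subgroup.closure S, ∀ c : Fin n → ℝ,
      g (∑ i, c i • α i) = ∑ i, c i • g (α i) := by
    intro g hg c
    have hadd := hlin g hg
    have h0 : g 0 = 0 := by
      have h := hadd 1 0 0
      simp only [smul_zero, add_zero, one_smul] at h
      exact add_eq_right.mp h.symm
    have key : ∀ s : Finset (Fin n),
        g (∑ i ∈ s, c i • α i) = ∑ i ∈ s, c i • g (α i) := by
      intro s
      induction s using Finset.induction_on with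
      | empty => simpa using h0
      | insert _ _ hnot ih =>
        rw [Finset.sum_insert hnot, Finset.sum_insert hnot, ← ih, hadd]
    exact key Finset.univ
  constructor
  · -- co-minuscule ⇒ w (α r) = θ
    intro h1
    have hwinv : w⁻¹ ∈ Subgroup.closure S := inv_mem hw
    set γ : V := w⁻¹ θ with hγ
    have hγR : γ ∈ R := hmemR w⁻¹ hwinv θ hθ
    have hγr : coeff γ r = 1 := by
      have := hcoeffr w⁻¹ hwinv θ hθ
      rw [← hγ] at this; omega
    have hγpos : ∀ j, 0 ≤ coeff γ j := by
      rcases (hcoeff _ hγR).2 with h | h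
      · exact h
      · exact absurd (h r) (by omega)
    have hwαrR : w (α r) ∈ R := hmemR w hw (α r) (hα r)
    -- expand θ = w γ
    have hθeq : ∑ i, (coeff γ i : ℝ) • w (α i) = θ := by
      rw [← hmapsum w hw, ← (hcoeff _ hγR).1]
      exact Equiv.apply_symm_apply w θ
    have hterm : ∀ i ∈ Finset.univ.erase r,
        ∑ k, ((coeff γ i : ℝ) * (coeff (w (α i)) k : ℝ)) • α k
          = (coeff γ i : ℝ) • w (α i) := by
      intro i hi
      simp only [mul_smul]
      rw [← Finset.smul_sum, ← (hcoeff _ (hwneg i (Finset.mem_erase.mp hi).1).1).1]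
    have h2 : ∑ k, (∑ i ∈ Finset.univ.erase r,
          (coeff γ i : ℝ) * (coeff (w (α i)) k : ℝ)) • α k
        = ∑ i ∈ Finset.univ.erase r, (coeff γ i : ℝ) • w (α i) := by
      simp only [Finset.sum_smul]
      rw [Finset.sum_comm]
      exact Finset.sum_congr rfl hterm
    have h3 : w (α r) + ∑ i ∈ Finset.univ.erase r, (coeff γ i : ℝ) • w (α i) = θ := by
      rw [← hθeq,
        ← Finset.add_sum_erase _ (fun i => (coeff γ i : ℝ) • w (α i)) (Finset.mem_univ r),
        hγr]
      simp
    -- expand everything in the basis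
    have hexp : ∑ k, ((coeff (w (α r)) k : ℝ)
        + ∑ i ∈ Finset.univ.erase r, (coeff γ i : ℝ) * (coeff (w (α i)) k : ℝ)) • α k
          = θ := by
      simp only [add_smul, Finset.sum_add_distrib]
      rw [h2, ← (hcoeff _ hwαrR).1]
      exact h3
    have hkey : ∀ k, (coeff θ k : ℝ) = (coeff (w (α r)) k : ℝ)
        + ∑ i ∈ Finset.univ.erase r, (coeff γ i : ℝ) * (coeff (w (α i)) k : ℝ) :=
      huniq _ _ ((hcoeff _ hθ).1.symm.trans hexp.symm)
    have hfinal : ∀ k, (coeff θ k : ℝ) = (coeff (w (α r)) k : ℝ) := by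
      intro k
      have hS : ∑ i ∈ Finset.univ.erase r, (coeff γ i : ℝ) * (coeff (w (α i)) k : ℝ) ≤ 0 := by
        apply Finset.sum_nonpos
        intro i hi
        have hir := (Finset.mem_erase.mp hi).1
        exact mul_nonpos_of_nonneg_of_nonpos
          (by exact_mod_cast hγpos i)
          (by exact_mod_cast (hwneg i hir).2 k)
      have hhk : (coeff (w (α r)) k : ℝ) ≤ (coeff θ k : ℝ) := by
        exact_mod_cast hhigh _ hwαrR k
      have := hkey k
      linarith
    calc w (α r) = ∑ k, (coeff (w (α r)) k : ℝ) • α k := (hcoeff _ hwαrR).1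
      _ = ∑ k, (coeff θ k : ℝ) • α k :=
          Finset.sum_congr rfl (fun k _ => by rw [hfinal k])
      _ = θ := (hcoeff _ hθ).1.symm
  · -- w (α r) = θ ⇒ co-minuscule
    intro h2
    have := hcoeffr w hw (α r) (hα r)
    rw [h2, hαrr] at this
    exact this
end

section
/- Let u be an element of the subgroup of the orthogonal group of ℝ^n generated by the reflections {s_j : 1 ≤ j ≤ n, j ≠ 2} such that u(α_j) is a negative root for every j ≠ 2 (u is the longest element of the parabolic Weyl group W_{Δ∖{α_2}}). Then u(α_2) = α_0 − α_2. -/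
/-!
Every element of the group generated by the `sⱼ`, `j ≠ 2`, is a signed permutation that
permutes `{e₁, e₂}` and sends each `eᵢ`, `i ≥ 3`, to some `±eₖ` with `k ≥ 3`. The height
functional (equal to `1` on every simple root) is at most `-1` on negative roots. Since `u α₁`
is negative, `u` swaps `e₁` and `e₂`; since `u e₃ = ∑_{i ≥ 3} u αᵢ` has height at most
`-(n - 2)`, it must be `-e₃`. Hence `u α₂ = u e₂ - u e₃ = e₁ + e₃ = α₀ - α₂`.
-/

open scoped InnerProductSpace

/-- `E n i` is the `i`-th standard basis vector of `ℝ^n` (for indices `1 ≤ i ≤ n`). -/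
noncomputable def E (n i : ℕ) : EuclideanSpace ℝ (Fin n) :=
  if h : 1 ≤ i ∧ i ≤ n then EuclideanSpace.single (⟨i - 1, by omega⟩ : Fin n) 1 else 0

/-- The simple roots of type `Bₙ` (indexed by `1 ≤ i ≤ n`):
`αᵢ = eᵢ - eᵢ₊₁` for `i ≤ n - 1` and `αₙ = eₙ`. -/
noncomputable def alphaB (n i : ℕ) : EuclideanSpace ℝ (Fin n) :=
  if i = n then E n n else E n i - E n (i + 1)

/-- The roots of type `Bₙ`: `±eᵢ ± eⱼ` (`1 ≤ i < j ≤ n`) and `±eᵢ` (`1 ≤ i ≤ n`). -/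
def RootB (n : ℕ) : Set (EuclideanSpace ℝ (Fin n)) :=
  {x | (∃ i j, 1 ≤ i ∧ i < j ∧ j ≤ n ∧
      (x = E n i + E n j ∨ x = -(E n i + E n j) ∨ x = E n i - E n j ∨ x = E n j - E n i)) ∨
    (∃ i, 1 ≤ i ∧ i ≤ n ∧ (x = E n i ∨ x = -E n i))}

/-- A positive root of type `Bₙ`: a root which is a nonnegative integer combination of
the simple roots. -/
def IsPosB (n : ℕ) (x : EuclideanSpace ℝ (Fin n)) : Prop :=
  x ∈ RootB n ∧ ∃ c : ℕ → ℕ, x = ∑ i ∈ Finset.Icc 1 n, (c i : ℝ) • alphaB n i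

/-- A negative root of type `Bₙ`: the negative of a positive root. -/
def IsNegB (n : ℕ) (x : EuclideanSpace ℝ (Fin n)) : Prop :=
  IsPosB n (-x)

/-- The simple reflections `sᵢ = s_{αᵢ}` of type `Bₙ`. -/
noncomputable def sB (n i : ℕ) : Equiv.Perm (EuclideanSpace ℝ (Fin n)) :=
  sRefl (alphaB n i)

section Reflection

variable {V : Type*} [NormedAddCommGroup V] [InnerProductSpace ℝ V]

lemma sRefl_apply (b x : V) : sRefl b x = x - (2 * ⟪x, b⟫_ℝ / ⟪b, b⟫_ℝ) • b := rfl

lemma sRefl_inv (b : V) : (sRefl b)⁻¹ = sRefl b := rfl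

lemma sRefl_add (b x y : V) : sRefl b (x + y) = sRefl b x + sRefl b y := by
  simp only [sRefl_apply, inner_add_left, add_div, mul_add, add_smul]
  abel

lemma sRefl_of_inner_eq_zero {b x : V} (h : ⟪x, b⟫_ℝ = 0) : sRefl b x = x := by
  simp [sRefl_apply, h]

lemma sRefl_self (b : V) : sRefl b b = -b := by
  rcases eq_or_ne b 0 with rfl | hb
  · simp [sRefl_apply]
  · have : ⟪b, b⟫_ℝ ≠ 0 := inner_self_ne_zero.mpr hb
    rw [sRefl_apply, mul_div_assoc, div_self this, mul_one, two_smul]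
    abel

lemma sRefl_sub_apply_left {a c : V} (h : ⟪a, a⟫_ℝ = ⟪c, c⟫_ℝ) : sRefl (a - c) a = c := by
  rcases eq_or_ne a c with rfl | hac
  · simp [sRefl_apply]
  · have hne : ⟪a - c, a - c⟫_ℝ ≠ 0 := inner_self_ne_zero.mpr (sub_ne_zero.mpr hac)
    have hcoef : 2 * ⟪a, a - c⟫_ℝ / ⟪a - c, a - c⟫_ℝ = 1 := by
      rw [div_eq_one_iff_eq hne]
      simp only [inner_sub_left, inner_sub_right, real_inner_comm a c]
      linarith
    rw [sRefl_apply, hcoef, one_smul, sub_sub_cancel]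

lemma sRefl_sub_apply_right {a c : V} (h : ⟪a, a⟫_ℝ = ⟪c, c⟫_ℝ) : sRefl (a - c) c = a := by
  have := (sRefl (a - c)).symm_apply_apply a
  rwa [sRefl_sub_apply_left h] at this

end Reflection

section Basis

variable {n : ℕ}

lemma inner_E_self {i : ℕ} (h1 : 1 ≤ i) (hn : i ≤ n) : ⟪E n i, E n i⟫_ℝ = 1 := by
  simp [E, h1, hn]

lemma inner_E_of_ne {i j : ℕ} (hij : i ≠ j) : ⟪E n i, E n j⟫_ℝ = 0 := by
  unfold E
  split_ifs <;> simp [EuclideanSpace.inner_single_left]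
  omega

lemma E_of_lt {i : ℕ} (h : n < i) : E n i = 0 := by
  simp [E, show ¬ i ≤ n by omega]

/-- Because `E n (n + 1) = 0`, the last simple root `eₙ` fits the pattern `eⱼ - eⱼ₊₁`. -/
lemma alphaB_eq_sub (n j : ℕ) : alphaB n j = E n j - E n (j + 1) := by
  unfold alphaB
  split_ifs with h
  · rw [h, E_of_lt n.lt_succ_self, sub_zero]
  · rfl

lemma sum_alphaB_Icc {j : ℕ} (hj : j ≤ n + 1) : ∑ i ∈ Finset.Icc j n, alphaB n i = E n j := by
  induction hj using Nat.decreasingInduction with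
  | self => rw [Finset.Icc_eq_empty (by omega), Finset.sum_empty, E_of_lt n.lt_succ_self]
  | of_succ k hk ih =>
    rw [← Finset.insert_Icc_add_one_left_eq_Icc (by omega), Finset.sum_insert (by simp), ih,
      alphaB_eq_sub, sub_add_cancel]

end Basis

section Height

variable {n : ℕ}

/-- Pairing with `∑ᵢ (n + 1 - i) eᵢ`; it takes the value `1` on every simple root. -/
noncomputable def heightB (n : ℕ) : EuclideanSpace ℝ (Fin n) →ₗ[ℝ] ℝ :=
  innerₗ _ (WithLp.toLp 2 fun m : Fin n => (n - m : ℝ))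

lemma heightB_E {i : ℕ} (h1 : 1 ≤ i) (hn : i ≤ n) : heightB n (E n i) = n + 1 - i := by
  rw [heightB, E, dif_pos (And.intro h1 hn), innerₗ, innerₛₗ_apply_apply,
    EuclideanSpace.inner_single_right]
  simp [Nat.cast_sub h1]
  ring

lemma heightB_alphaB {i : ℕ} (h1 : 1 ≤ i) (hn : i ≤ n) : heightB n (alphaB n i) = 1 := by
  rw [alphaB_eq_sub, map_sub, heightB_E h1 hn]
  rcases hn.lt_or_eq with hlt | rfl
  · rw [heightB_E (by omega) hlt]; push_cast; ring
  · rw [E_of_lt (Nat.lt_succ_self _), map_zero]; ring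

lemma heightB_ne_zero_of_mem_rootB {x : EuclideanSpace ℝ (Fin n)} (hx : x ∈ RootB n) :
    heightB n x ≠ 0 := by
  rcases hx with ⟨i, j, hi, hij, hj, hx⟩ | ⟨i, hi, hin, hx⟩
  · have hij' : (i : ℝ) < j := by exact_mod_cast hij
    have hjn : (j : ℝ) ≤ n := by exact_mod_cast hj
    rcases hx with rfl | rfl | rfl | rfl <;>
      simp only [map_add, map_neg, map_sub, heightB_E hi (hij.le.trans hj),
        heightB_E (hi.trans hij.le) hj] <;> linarith
  · have hin' : (i : ℝ) ≤ n := by exact_mod_cast hin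
    rcases hx with rfl | rfl <;> simp only [map_neg, heightB_E hi hin] <;> linarith

lemma heightB_le_neg_one_of_isNegB {x : EuclideanSpace ℝ (Fin n)} (hx : IsNegB n x) :
    heightB n x ≤ -1 := by
  obtain ⟨hroot, c, hc⟩ := hx
  have hheight : heightB n (-x) = ((∑ i ∈ Finset.Icc 1 n, c i : ℕ) : ℝ) := by
    rw [hc, map_sum, Nat.cast_sum]
    refine Finset.sum_congr rfl fun i hi => ?_
    rw [Finset.mem_Icc] at hi
    rw [map_smul, heightB_alphaB hi.1 hi.2, smul_eq_mul, mul_one]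
  have hpos : (1 : ℝ) ≤ heightB n (-x) := by
    rw [hheight, Nat.one_le_cast, Nat.one_le_iff_ne_zero]
    rintro hzero
    exact heightB_ne_zero_of_mem_rootB hroot (by rw [hheight, hzero, Nat.cast_zero])
  rw [map_neg] at hpos
  linarith

end Height

section Parabolic

variable {n : ℕ}

lemma sB_E_of_ne {i j : ℕ} (hij : i ≠ j) (hij' : i ≠ j + 1) : sB n j (E n i) = E n i :=
  sRefl_of_inner_eq_zero <| by
    rw [alphaB_eq_sub, inner_sub_right, inner_E_of_ne hij, inner_E_of_ne hij', sub_zero]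

lemma sB_E_self {j : ℕ} (h1 : 1 ≤ j) (hn : j < n) : sB n j (E n j) = E n (j + 1) := by
  rw [sB, alphaB_eq_sub]
  exact sRefl_sub_apply_left (by rw [inner_E_self h1 hn.le, inner_E_self (by omega) hn])

lemma sB_E_succ {j : ℕ} (h1 : 1 ≤ j) (hn : j < n) : sB n j (E n (j + 1)) = E n j := by
  rw [sB, alphaB_eq_sub]
  exact sRefl_sub_apply_right (by rw [inner_E_self h1 hn.le, inner_E_self (by omega) hn])

lemma sB_last_E : sB n n (E n n) = -E n n := by
  rw [sB, alphaB, if_pos rfl]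
  exact sRefl_self _

structure PreservesBlocksB (n : ℕ) (g : Equiv.Perm (EuclideanSpace ℝ (Fin n))) : Prop where
  map_add : ∀ x y, g (x + y) = g x + g y
  fix_or_swap :
    (g (E n 1) = E n 1 ∧ g (E n 2) = E n 2) ∨ (g (E n 1) = E n 2 ∧ g (E n 2) = E n 1)
  map_E_of_three_le :
    ∀ i, 3 ≤ i → i ≤ n → ∃ k, 3 ≤ k ∧ k ≤ n ∧ (g (E n i) = E n k ∨ g (E n i) = -E n k)

namespace PreservesBlocksB

variable {g h : Equiv.Perm (EuclideanSpace ℝ (Fin n))}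

lemma map_neg (hg : PreservesBlocksB n g) (x : EuclideanSpace ℝ (Fin n)) : g (-x) = -g x :=
  _root_.map_neg (AddMonoidHom.mk' g hg.map_add) x

lemma map_sub (hg : PreservesBlocksB n g) (x y : EuclideanSpace ℝ (Fin n)) :
    g (x - y) = g x - g y :=
  _root_.map_sub (AddMonoidHom.mk' g hg.map_add) x y

lemma map_sum (hg : PreservesBlocksB n g) {ι : Type*} (s : Finset ι)
    (f : ι → EuclideanSpace ℝ (Fin n)) : g (∑ i ∈ s, f i) = ∑ i ∈ s, g (f i) :=
  _root_.map_sum (AddMonoidHom.mk' g hg.map_add) f s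

lemma one : PreservesBlocksB n 1 :=
  ⟨fun _ _ => rfl, Or.inl ⟨rfl, rfl⟩, fun i hi hin => ⟨i, hi, hin, Or.inl rfl⟩⟩

lemma mul (hg : PreservesBlocksB n g) (hh : PreservesBlocksB n h) :
    PreservesBlocksB n (g * h) := by
  refine ⟨fun x y => ?_, ?_, fun i hi hin => ?_⟩
  · simp only [Equiv.Perm.mul_apply, hh.map_add, hg.map_add]
  · simp only [Equiv.Perm.mul_apply]
    rcases hg.fix_or_swap with ⟨g1, g2⟩ | ⟨g1, g2⟩ <;>
      rcases hh.fix_or_swap with ⟨h1, h2⟩ | ⟨h1, h2⟩ <;> simp [g1, g2, h1, h2]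
  · obtain ⟨k, hk, hkn, hhk⟩ := hh.map_E_of_three_le i hi hin
    obtain ⟨m, hm, hmn, hgm⟩ := hg.map_E_of_three_le k hk hkn
    refine ⟨m, hm, hmn, ?_⟩
    simp only [Equiv.Perm.mul_apply]
    rcases hhk with hhk | hhk <;> rcases hgm with hgm | hgm <;> simp [hhk, hgm, hg.map_neg]

end PreservesBlocksB

lemma preservesBlocksB_sB {j : ℕ} (hn : 2 ≤ n) (hj1 : 1 ≤ j) (hjn : j ≤ n) (hj2 : j ≠ 2) :
    PreservesBlocksB n (sB n j) := by
  refine ⟨sRefl_add _, ?_, fun i hi hin => ?_⟩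
  · rcases eq_or_ne j 1 with rfl | hj1'
    · exact Or.inr ⟨sB_E_self le_rfl hn, sB_E_succ le_rfl hn⟩
    · exact Or.inl ⟨sB_E_of_ne (by omega) (by omega), sB_E_of_ne (by omega) (by omega)⟩
  · rcases eq_or_ne i j with rfl | hij
    · rcases hjn.lt_or_eq with hlt | rfl
      · exact ⟨i + 1, by omega, hlt, Or.inl (sB_E_self hj1 hlt)⟩
      · exact ⟨i, hi, le_rfl, Or.inr sB_last_E⟩
    rcases eq_or_ne i (j + 1) with rfl | hij'
    · exact ⟨j, by omega, by omega, Or.inl (sB_E_succ hj1 (by omega))⟩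
    · exact ⟨i, hi, hin, Or.inl (sB_E_of_ne hij hij')⟩

lemma preservesBlocksB_of_mem_closure {u : Equiv.Perm (EuclideanSpace ℝ (Fin n))} (hn : 2 ≤ n)
    (hu : u ∈ Subgroup.closure {g | ∃ j, 1 ≤ j ∧ j ≤ n ∧ j ≠ 2 ∧ g = sB n j}) :
    PreservesBlocksB n u := by
  induction hu using Subgroup.closure_induction'' with
  | mem g hg =>
    obtain ⟨j, hj1, hjn, hj2, rfl⟩ := hg
    exact preservesBlocksB_sB hn hj1 hjn hj2
  | inv_mem g hg =>
    obtain ⟨j, hj1, hjn, hj2, rfl⟩ := hg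
    exact sRefl_inv (alphaB n j) ▸ preservesBlocksB_sB hn hj1 hjn hj2
  | one => exact .one
  | mul g h _ _ hg hh => exact hg.mul hh

end Parabolic

namespace PreservesBlocksB

variable {n : ℕ} {u : Equiv.Perm (EuclideanSpace ℝ (Fin n))}

lemma swap_of_isNegB (hu : PreservesBlocksB n u) (hn : 2 ≤ n)
    (hneg : IsNegB n (u (alphaB n 1))) : u (E n 1) = E n 2 ∧ u (E n 2) = E n 1 := by
  refine hu.fix_or_swap.resolve_left fun ⟨h1, h2⟩ => ?_
  have hheight := heightB_le_neg_one_of_isNegB hneg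
  rw [alphaB_eq_sub, hu.map_sub, h1, h2, _root_.map_sub, heightB_E le_rfl (by omega),
    heightB_E (by omega) hn] at hheight
  push_cast at hheight
  linarith

lemma map_E_three (hu : PreservesBlocksB n u) (hn : 3 ≤ n)
    (hneg : ∀ j, 3 ≤ j → j ≤ n → IsNegB n (u (alphaB n j))) : u (E n 3) = -E n 3 := by
  have hheight : heightB n (u (E n 3)) ≤ -(n - 2 : ℝ) := calc
    heightB n (u (E n 3)) = ∑ i ∈ Finset.Icc 3 n, heightB n (u (alphaB n i)) := by
      rw [← sum_alphaB_Icc (by omega), hu.map_sum, _root_.map_sum]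
    _ ≤ ∑ i ∈ Finset.Icc 3 n, (-1 : ℝ) := Finset.sum_le_sum fun i hi =>
      heightB_le_neg_one_of_isNegB (hneg i (Finset.mem_Icc.1 hi).1 (Finset.mem_Icc.1 hi).2)
    _ = -(n - 2 : ℝ) := by
      rw [Finset.sum_const, Nat.card_Icc, nsmul_eq_mul, Nat.cast_sub (by omega)]
      push_cast
      ring
  obtain ⟨k, hk3, hkn, hk | hk⟩ := hu.map_E_of_three_le 3 le_rfl hn
  · rw [hk, heightB_E (by omega) hkn] at hheight
    have hk3' : (3 : ℝ) ≤ k := by exact_mod_cast hk3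
    have hkn' : (k : ℝ) ≤ n := by exact_mod_cast hkn
    linarith
  · rw [hk, _root_.map_neg, heightB_E (by omega) hkn] at hheight
    have hk3' : k ≤ 3 := by exact_mod_cast (by linarith : (k : ℝ) ≤ 3)
    obtain rfl : k = 3 := by omega
    exact hk

end PreservesBlocksB

/-- Type `Bₙ` (`n ≥ 2`): if `u` is the longest element of the parabolic Weyl group generated
by the simple reflections `{sⱼ : j ≠ 2}` (i.e. `u` lies in the subgroup generated by these
reflections and sends every simple root `αⱼ`, `j ≠ 2`, to a negative root), then
`u(α₂) = α₀ - α₂`, where `α₀ = e₁ + e₂` is the highest root. -/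
theorem stmt_3 (n : ℕ) (hn : 2 ≤ n)
    (u : Equiv.Perm (EuclideanSpace ℝ (Fin n)))
    (hu : u ∈ Subgroup.closure {g | ∃ j, 1 ≤ j ∧ j ≤ n ∧ j ≠ 2 ∧ g = sB n j})
    (hneg : ∀ j, 1 ≤ j → j ≤ n → j ≠ 2 → IsNegB n (u (alphaB n j))) :
    u (alphaB n 2) = (E n 1 + E n 2) - alphaB n 2 := by
  have hP := preservesBlocksB_of_mem_closure hn hu
  obtain ⟨-, hu2⟩ := hP.swap_of_isNegB hn (hneg 1 le_rfl (by omega) (by omega))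
  rcases hn.eq_or_lt with rfl | hn3
  · rw [alphaB, if_pos rfl, hu2]
    abel
  · have hu3 := hP.map_E_three hn3 fun j hj hjn => hneg j (by omega) hjn (by omega)
    rw [alphaB_eq_sub, hP.map_sub, hu2, hu3]
    abel
end

section
/- Let u be an element of the subgroup of the orthogonal group of ℝ^n generated by the reflections {s_j : 1 ≤ j ≤ n, j ≠ 1} such that u(α_j) is a negative root for every j ≠ 1 (u is the longest element of the parabolic Weyl group W_{Δ∖{α_1}}). Then u(α_1) = α_0 − α_1. -/
open scoped InnerProductSpace

/-- The simple roots of type `Cₙ` (indexed by `1 ≤ i ≤ n`):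
`αᵢ = eᵢ - eᵢ₊₁` for `i ≤ n - 1` and `αₙ = 2eₙ`. -/
noncomputable def alphaC (n i : ℕ) : EuclideanSpace ℝ (Fin n) :=
  if i = n then (2 : ℝ) • E n n else E n i - E n (i + 1)

/-- The roots of type `Cₙ`: `±eᵢ ± eⱼ` (`1 ≤ i < j ≤ n`) and `±2eᵢ` (`1 ≤ i ≤ n`). -/
def RootC (n : ℕ) : Set (EuclideanSpace ℝ (Fin n)) :=
  {x | (∃ i j, 1 ≤ i ∧ i < j ∧ j ≤ n ∧
      (x = E n i + E n j ∨ x = -(E n i + E n j) ∨ x = E n i - E n j ∨ x = E n j - E n i)) ∨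
    (∃ i, 1 ≤ i ∧ i ≤ n ∧ (x = (2 : ℝ) • E n i ∨ x = -((2 : ℝ) • E n i)))}

/-- A positive root of type `Cₙ`: a root which is a nonnegative integer combination of
the simple roots. -/
def IsPosC (n : ℕ) (x : EuclideanSpace ℝ (Fin n)) : Prop :=
  x ∈ RootC n ∧ ∃ c : ℕ → ℕ, x = ∑ i ∈ Finset.Icc 1 n, (c i : ℝ) • alphaC n i

/-- A negative root of type `Cₙ`: the negative of a positive root. -/
def IsNegC (n : ℕ) (x : EuclideanSpace ℝ (Fin n)) : Prop :=
  IsPosC n (-x)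

/-- The simple reflections `sᵢ = s_{αᵢ}` of type `Cₙ`. -/
noncomputable def sC (n i : ℕ) : Equiv.Perm (EuclideanSpace ℝ (Fin n)) :=
  sRefl (alphaC n i)

namespace Stmt4Aux

lemma sRefl_apply {V : Type*} [NormedAddCommGroup V] [InnerProductSpace ℝ V] (b x : V) :
    sRefl b x = x - (2 * ⟪x, b⟫_ℝ / ⟪b, b⟫_ℝ) • b := rfl

lemma sRefl_add {V : Type*} [NormedAddCommGroup V] [InnerProductSpace ℝ V] (b x y : V) :
    sRefl b (x + y) = sRefl b x + sRefl b y := by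
  simp only [sRefl_apply, inner_add_left]; module

lemma sRefl_smul {V : Type*} [NormedAddCommGroup V] [InnerProductSpace ℝ V] (b x : V) (c : ℝ) :
    sRefl b (c • x) = c • sRefl b x := by
  simp only [sRefl_apply, real_inner_smul_left]; module

lemma sRefl_inv {V : Type*} [NormedAddCommGroup V] [InnerProductSpace ℝ V] (b : V) :
    (sRefl b)⁻¹ = sRefl b := by
  ext x; rfl

lemma E_eq (n i : ℕ) (h1 : 1 ≤ i) (h2 : i ≤ n) :
    E n i = EuclideanSpace.single (⟨i - 1, by omega⟩ : Fin n) 1 := by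
  rw [E, dif_pos ⟨h1, h2⟩]

lemma inner_E_E (n i j : ℕ) (hi1 : 1 ≤ i) (hin : i ≤ n) (hj1 : 1 ≤ j) (hjn : j ≤ n) :
    ⟪E n i, E n j⟫_ℝ = if i = j then 1 else 0 := by
  rw [E_eq n i hi1 hin, E_eq n j hj1 hjn, EuclideanSpace.inner_single_left]
  simp only [map_one, one_mul, EuclideanSpace.single_apply, Fin.mk.injEq]
  by_cases h : i = j
  · simp [h]
  · rw [if_neg h, if_neg]; omega

/-- Partial coordinate sum. -/
noncomputable def Ssum (n k : ℕ) (x : EuclideanSpace ℝ (Fin n)) : ℝ :=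
  ∑ i ∈ Finset.univ.filter (fun i : Fin n => (i : ℕ) < k), x i

lemma Ssum_zero (n k : ℕ) : Ssum n k (0 : EuclideanSpace ℝ (Fin n)) = 0 := by
  simp [Ssum]

lemma Ssum_add (n k : ℕ) (x y : EuclideanSpace ℝ (Fin n)) :
    Ssum n k (x + y) = Ssum n k x + Ssum n k y := by
  simp [Ssum, Finset.sum_add_distrib]

lemma Ssum_smul (n k : ℕ) (c : ℝ) (x : EuclideanSpace ℝ (Fin n)) :
    Ssum n k (c • x) = c * Ssum n k x := by
  simp [Ssum, Finset.mul_sum]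

lemma Ssum_neg (n k : ℕ) (x : EuclideanSpace ℝ (Fin n)) :
    Ssum n k (-x) = -Ssum n k x := by
  have := Ssum_smul n k (-1) x
  simpa using this

lemma Ssum_sub (n k : ℕ) (x y : EuclideanSpace ℝ (Fin n)) :
    Ssum n k (x - y) = Ssum n k x - Ssum n k y := by
  rw [sub_eq_add_neg, Ssum_add, Ssum_neg, sub_eq_add_neg]

lemma Ssum_sum (n k : ℕ) {ι : Type*} (s : Finset ι) (f : ι → EuclideanSpace ℝ (Fin n)) :
    Ssum n k (∑ i ∈ s, f i) = ∑ i ∈ s, Ssum n k (f i) := by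
  classical
  induction s using Finset.induction with
  | empty => simp [Ssum_zero]
  | insert a s h ih => rw [Finset.sum_insert h, Finset.sum_insert h, Ssum_add, ih]

lemma Ssum_E (n k i : ℕ) (hi1 : 1 ≤ i) (hin : i ≤ n) :
    Ssum n k (E n i) = if i ≤ k then 1 else 0 := by
  rw [Ssum, E_eq n i hi1 hin]
  rw [Finset.sum_congr rfl (fun j _ => EuclideanSpace.single_apply _ _ j)]
  rw [Finset.sum_ite_eq' _ (⟨i - 1, by omega⟩ : Fin n) (fun _ => (1 : ℝ))]
  simp only [Finset.mem_filter, Finset.mem_univ, true_and]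
  by_cases h : i ≤ k
  · rw [if_pos (by omega), if_pos h]
  · rw [if_neg (by omega), if_neg h]

lemma Ssum_alpha_nonneg (n k i : ℕ) (hi1 : 1 ≤ i) (hin : i ≤ n) :
    0 ≤ Ssum n k (alphaC n i) := by
  rw [alphaC]
  by_cases h : i = n
  · rw [if_pos h, Ssum_smul, Ssum_E n k n (by omega) le_rfl]
    split_ifs <;> norm_num
  · rw [if_neg h, Ssum_sub, Ssum_E n k i hi1 hin, Ssum_E n k (i + 1) (by omega) (by omega)]
    split_ifs <;> norm_num; omega

lemma isNeg_Ssum {n : ℕ} {x : EuclideanSpace ℝ (Fin n)} (h : IsNegC n x) (k : ℕ) :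
    Ssum n k x ≤ 0 := by
  obtain ⟨-, c, hc⟩ := h
  have h2 : Ssum n k (-x) = ∑ i ∈ Finset.Icc 1 n, (c i : ℝ) * Ssum n k (alphaC n i) := by
    rw [hc, Ssum_sum]
    exact Finset.sum_congr rfl fun i _ => Ssum_smul n k _ _
  have h3 : 0 ≤ Ssum n k (-x) := by
    rw [h2]
    refine Finset.sum_nonneg fun i hi => ?_
    rw [Finset.mem_Icc] at hi
    exact mul_nonneg (by positivity) (Ssum_alpha_nonneg n k i hi.1 hi.2)
  rw [Ssum_neg] at h3; linarith

lemma inner_E_alpha (n i j : ℕ) (hi1 : 1 ≤ i) (hin : i ≤ n) (hj1 : 1 ≤ j) (hjn : j ≤ n) :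
    ⟪E n i, alphaC n j⟫_ℝ =
      if j = n then (if i = n then 2 else 0)
      else (if i = j then 1 else 0) - (if i = j + 1 then 1 else 0) := by
  rw [alphaC]
  by_cases h : j = n
  · rw [if_pos h, if_pos h, real_inner_smul_right, inner_E_E n i n hi1 hin (by omega) le_rfl]
    split_ifs <;> norm_num
  · rw [if_neg h, if_neg h, inner_sub_right, inner_E_E n i j hi1 hin hj1 hjn,
      inner_E_E n i (j + 1) hi1 hin (by omega) (by omega)]

lemma inner_alpha_alpha (n j : ℕ) (hj1 : 1 ≤ j) (hjn : j ≤ n) :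
    ⟪alphaC n j, alphaC n j⟫_ℝ = if j = n then 4 else 2 := by
  by_cases h : j = n
  · rw [if_pos h]
    conv_lhs => rw [alphaC, if_pos h]
    rw [real_inner_smul_left, real_inner_smul_right,
      inner_E_E n n n (by omega) le_rfl (by omega) le_rfl]
    norm_num
  · rw [if_neg h]
    conv_lhs => rw [alphaC, if_neg h]
    rw [inner_sub_left, inner_sub_right, inner_sub_right,
      inner_E_E n j j hj1 hjn hj1 hjn,
      inner_E_E n j (j+1) hj1 hjn (by omega) (by omega),
      inner_E_E n (j+1) j (by omega) (by omega) hj1 hjn,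
      inner_E_E n (j+1) (j+1) (by omega) (by omega) (by omega) (by omega)]
    rw [if_pos rfl, if_pos rfl, if_neg (by omega), if_neg (by omega)]
    norm_num

lemma sC_E (n j i : ℕ) (hj1 : 1 ≤ j) (hjn : j ≤ n) (hi1 : 1 ≤ i) (hin : i ≤ n) :
    sC n j (E n i) =
      if j = n then (if i = n then -E n n else E n i)
      else if i = j then E n (j + 1) else if i = j + 1 then E n j else E n i := by
  rw [sC, sRefl_apply, inner_E_alpha n i j hi1 hin hj1 hjn, inner_alpha_alpha n j hj1 hjn]
  by_cases h : j = n
  · simp only [if_pos h]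
    by_cases h2 : i = n
    · simp only [if_pos h2]
      rw [h2, h, alphaC, if_pos rfl]
      module
    · simp only [if_neg h2]; norm_num
  · simp only [if_neg h]
    by_cases h2 : i = j
    · simp only [if_pos h2]
      rw [if_neg (show i ≠ j + 1 by omega), h2, alphaC, if_neg h]
      module
    · simp only [if_neg h2]
      by_cases h3 : i = j + 1
      · simp only [if_pos h3]
        rw [h3, alphaC, if_neg h]
        module
      · simp only [if_neg h3]; norm_num

end Stmt4Aux

namespace Stmt4Aux

/-- Invariant preserved by the parabolic subgroup. -/
def Good (n : ℕ) (u : Equiv.Perm (EuclideanSpace ℝ (Fin n))) : Prop :=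
  (∀ x y, u (x + y) = u x + u y) ∧ (∀ (c : ℝ) x, u (c • x) = c • u x) ∧
  u (E n 1) = E n 1 ∧
  ∀ i, 2 ≤ i → i ≤ n → ∃ k, 2 ≤ k ∧ k ≤ n ∧ (u (E n i) = E n k ∨ u (E n i) = -E n k)

lemma good_one (n : ℕ) : Good n 1 := by
  refine ⟨fun x y => rfl, fun c x => rfl, rfl, fun i hi2 hin => ⟨i, hi2, hin, Or.inl rfl⟩⟩

lemma Good.neg {n : ℕ} {u : Equiv.Perm (EuclideanSpace ℝ (Fin n))} (h : Good n u)
    (x : EuclideanSpace ℝ (Fin n)) : u (-x) = -u x := by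
  have := h.2.1 (-1) x
  simpa using this

lemma Good.mul {n : ℕ} {u v : Equiv.Perm (EuclideanSpace ℝ (Fin n))}
    (hu : Good n u) (hv : Good n v) : Good n (u * v) := by
  obtain ⟨ha, hs, h1, hb⟩ := hu
  obtain ⟨ha', hs', h1', hb'⟩ := hv
  refine ⟨fun x y => ?_, fun c x => ?_, ?_, fun i hi2 hin => ?_⟩
  · simp only [Equiv.Perm.mul_apply, ha', ha]
  · simp only [Equiv.Perm.mul_apply, hs', hs]
  · simp only [Equiv.Perm.mul_apply, h1', h1]
  · obtain ⟨k, hk2, hkn, hk⟩ := hb' i hi2 hin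
    obtain ⟨m, hm2, hmn, hm⟩ := hb k hk2 hkn
    refine ⟨m, hm2, hmn, ?_⟩
    rcases hk with hk | hk <;> rcases hm with hm | hm <;>
      simp only [Equiv.Perm.mul_apply, hk, hm, Good.neg ⟨ha, hs, h1, hb⟩, neg_neg] <;> tauto

lemma good_sC (n j : ℕ) (hj2 : 2 ≤ j) (hjn : j ≤ n) (hn : 3 ≤ n) : Good n (sC n j) := by
  refine ⟨sRefl_add _, fun c x => sRefl_smul _ x c, ?_, fun i hi2 hin => ?_⟩
  · rw [sC_E n j 1 (by omega) hjn (by omega) (by omega)]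
    rw [if_neg (show ¬ (1:ℕ) = j by omega)]
    by_cases h : j = n
    · rw [if_pos h, if_neg (by omega)]
    · rw [if_neg h, if_neg (by omega)]
  · rw [sC_E n j i (by omega) hjn (by omega) hin]
    by_cases h : j = n
    · rw [if_pos h]
      by_cases h2 : i = n
      · rw [if_pos h2]; exact ⟨n, by omega, le_rfl, Or.inr rfl⟩
      · rw [if_neg h2]; exact ⟨i, hi2, hin, Or.inl rfl⟩
    · rw [if_neg h]
      by_cases h2 : i = j
      · rw [if_pos h2]; exact ⟨j + 1, by omega, by omega, Or.inl rfl⟩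
      · rw [if_neg h2]
        by_cases h3 : i = j + 1
        · rw [if_pos h3]; exact ⟨j, by omega, by omega, Or.inl rfl⟩
        · rw [if_neg h3]; exact ⟨i, hi2, hin, Or.inl rfl⟩

end Stmt4Aux

/-- Type `Cₙ` (`n ≥ 3`): if `u` is the longest element of the parabolic Weyl group generated
by the simple reflections `{sⱼ : j ≠ 1}` (i.e. `u` lies in the subgroup generated by these
reflections and sends every simple root `αⱼ`, `j ≠ 1`, to a negative root), then
`u(α₁) = α₀ - α₁`, where `α₀ = 2e₁` is the highest root. -/
theorem stmt_4 (n : ℕ) (hn : 3 ≤ n)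
    (u : Equiv.Perm (EuclideanSpace ℝ (Fin n)))
    (hu : u ∈ Subgroup.closure {g | ∃ j, 1 ≤ j ∧ j ≤ n ∧ j ≠ 1 ∧ g = sC n j})
    (hneg : ∀ j, 1 ≤ j → j ≤ n → j ≠ 1 → IsNegC n (u (alphaC n j))) :
    u (alphaC n 1) = (2 : ℝ) • E n 1 - alphaC n 1 := by
  classical
  open Stmt4Aux in
  have hgood : Stmt4Aux.Good n u := by
    refine Subgroup.closure_induction_left (p := fun x _ => Stmt4Aux.Good n x)
      (Stmt4Aux.good_one n) ?_ ?_ hu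
    · rintro x ⟨j, hj1, hjn, hjne, rfl⟩ y hy ih
      exact (Stmt4Aux.good_sC n j (by omega) hjn hn).mul ih
    · rintro x ⟨j, hj1, hjn, hjne, rfl⟩ y hy ih
      rw [sC, Stmt4Aux.sRefl_inv]
      exact (Stmt4Aux.good_sC n j (by omega) hjn hn).mul ih
  have hzero : u 0 = 0 := by
    have := hgood.2.1 0 0
    simpa using this
  have hsub : ∀ x y, u (x - y) = u x - u y := by
    intro x y
    rw [sub_eq_add_neg, hgood.1, hgood.neg, ← sub_eq_add_neg]
  have key : ∀ d i, 2 ≤ i → i ≤ n → n = i + d →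
      ∃ k, 2 ≤ k ∧ k ≤ i ∧ u (E n i) = -E n k := by
    intro d
    induction d with
    | zero =>
      intro i hi2 hin hni
      have hi : i = n := by omega
      obtain ⟨k, hk2, hkn, hk⟩ := hgood.2.2.2 i hi2 hin
      rcases hk with hk | hk
      · exfalso
        have hN := Stmt4Aux.isNeg_Ssum (hneg i (by omega) hin (by omega)) i
        rw [alphaC, if_pos hi, show E n n = E n i by rw [hi], hgood.2.1, hk, Stmt4Aux.Ssum_smul,
          Stmt4Aux.Ssum_E n i k (by omega) hkn] at hN
        rw [if_pos (show k ≤ i by omega)] at hN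
        linarith
      · exact ⟨k, hk2, by omega, hk⟩
    | succ d ih =>
      intro i hi2 hin hni
      obtain ⟨b, hb2, hbi, hub⟩ := ih (i + 1) (by omega) (by omega) (by omega)
      obtain ⟨a, ha2, han, hua⟩ := hgood.2.2.2 i hi2 hin
      have hnegi := hneg i (by omega) hin (by omega)
      rw [alphaC, if_neg (show i ≠ n by omega), hsub] at hnegi
      rcases hua with hua | hua
      · exfalso
        have hN := Stmt4Aux.isNeg_Ssum hnegi n
        rw [hua, hub, Stmt4Aux.Ssum_sub, Stmt4Aux.Ssum_neg,
          Stmt4Aux.Ssum_E n n a (by omega) han,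
          Stmt4Aux.Ssum_E n n b (by omega) (by omega)] at hN
        rw [if_pos han, if_pos (show b ≤ n by omega)] at hN
        linarith
      · have hab : a ≠ b := by
          intro hab
          have h00 : u (E n i - E n (i + 1)) = 0 := by
            rw [hsub, hua, hub, hab, sub_self]
          have h01 : E n i - E n (i + 1) = 0 := by
            apply u.injective
            rw [h00, hzero]
          have h02 := congrArg (Stmt4Aux.Ssum n i) h01
          rw [Stmt4Aux.Ssum_sub, Stmt4Aux.Ssum_E n i i (by omega) hin,
            Stmt4Aux.Ssum_E n i (i + 1) (by omega) (by omega), Stmt4Aux.Ssum_zero] at h02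
          rw [if_pos le_rfl, if_neg (by omega)] at h02
          norm_num at h02
        have haleb : a ≤ b := by
          by_contra hc
          have hN := Stmt4Aux.isNeg_Ssum hnegi b
          rw [hua, hub, Stmt4Aux.Ssum_sub, Stmt4Aux.Ssum_neg, Stmt4Aux.Ssum_neg,
            Stmt4Aux.Ssum_E n b a (by omega) han,
            Stmt4Aux.Ssum_E n b b (by omega) (by omega)] at hN
          rw [if_neg (show ¬ a ≤ b from hc), if_pos le_rfl] at hN
          norm_num at hN
        exact ⟨a, ha2, by omega, hua⟩
  obtain ⟨k, hk2, hki, huk⟩ := key (n - 2) 2 le_rfl (by omega) (by omega)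
  have hkk : k = 2 := by omega
  subst hkk
  rw [alphaC, if_neg (show (1:ℕ) ≠ n by omega), hsub, hgood.2.2.1, huk]
  module
end

section
/- Let v = s_2 ∘ s_3 ∘ ⋯ ∘ s_n ∘ s_1 ∘ s_2 ∘ ⋯ ∘ s_{n−1} (composition of reflections, rightmost factor applied first). Then v⁻¹(α_0) = −α_{n−1}. -/
open scoped InnerProductSpace

/-- `v = s₂ ∘ s₃ ∘ ⋯ ∘ sₙ ∘ s₁ ∘ s₂ ∘ ⋯ ∘ sₙ₋₁` (rightmost factor applied first);
recall that in `Equiv.Perm` the product `f * g` is the composition `f ∘ g`. -/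
noncomputable def vB (n : ℕ) : Equiv.Perm (EuclideanSpace ℝ (Fin n)) :=
  (((List.range (n - 1)).map fun k => sB n (k + 2)) ++
    ((List.range (n - 1)).map fun k => sB n (k + 1))).prod

section Aux

variable {V : Type*} [NormedAddCommGroup V] [InnerProductSpace ℝ V]

lemma sRefl_sub (b x y : V) : sRefl b (x - y) = sRefl b x - sRefl b y := by
  simp only [sRefl_apply, inner_sub_left]
  rw [mul_sub, sub_div, sub_smul]
  abel

end Aux

lemma sB_sub (n i : ℕ) (x y : EuclideanSpace ℝ (Fin n)) :
    sB n i (x - y) = sB n i x - sB n i y := sRefl_sub _ _ _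

lemma sB_add (n i : ℕ) (x y : EuclideanSpace ℝ (Fin n)) :
    sB n i (x + y) = sB n i x + sB n i y := sRefl_add _ _ _

lemma inner_E (n i j : ℕ) (hi1 : 1 ≤ i) (hi : i ≤ n) (hj1 : 1 ≤ j) (hj : j ≤ n) :
    ⟪E n i, E n j⟫_ℝ = if i = j then 1 else 0 := by
  rw [E, E, dif_pos ⟨hi1, hi⟩, dif_pos ⟨hj1, hj⟩, EuclideanSpace.inner_single_left,
    EuclideanSpace.single_apply]
  simp only [map_one, one_mul]
  have key : ((⟨i - 1, by omega⟩ : Fin n) = ⟨j - 1, by omega⟩) ↔ i = j := by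
    rw [Fin.mk.injEq]; omega
  by_cases h : i = j
  · rw [if_pos (key.mpr h), if_pos h]
  · rw [if_neg (fun hh => h (key.mp hh)), if_neg h]

lemma sB_apply_E (n i j : ℕ) (hi1 : 1 ≤ i) (hi : i + 1 ≤ n) (hj1 : 1 ≤ j) (hj : j ≤ n) :
    sB n i (E n j) = if j = i then E n (i + 1) else if j = i + 1 then E n i else E n j := by
  have hne : i ≠ n := by omega
  have hb : alphaB n i = E n i - E n (i + 1) := by rw [alphaB, if_neg hne]
  have h1 : ⟪alphaB n i, alphaB n i⟫_ℝ = 2 := by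
    rw [hb, inner_sub_left, inner_sub_right, inner_sub_right,
      inner_E n i i hi1 (by omega) hi1 (by omega),
      inner_E n i (i+1) hi1 (by omega) (by omega) hi,
      inner_E n (i+1) i (by omega) hi hi1 (by omega),
      inner_E n (i+1) (i+1) (by omega) hi (by omega) hi,
      if_pos rfl, if_neg (by omega : i ≠ i + 1), if_neg (by omega : i + 1 ≠ i), if_pos rfl]
    ring
  have h2 : ⟪E n j, alphaB n i⟫_ℝ =
      (if j = i then (1:ℝ) else 0) - (if j = i + 1 then (1:ℝ) else 0) := by
    rw [hb, inner_sub_right, inner_E n j i hj1 hj hi1 (by omega),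
      inner_E n j (i+1) hj1 hj (by omega) hi]
  rw [show sB n i = sRefl (alphaB n i) from rfl, sRefl_apply, h1, h2, hb]
  by_cases hji : j = i
  · rw [if_pos hji, if_neg (by omega : j ≠ i + 1), if_pos hji, hji]
    norm_num
  · rw [if_neg hji]
    by_cases hji1 : j = i + 1
    · rw [if_pos hji1, if_neg hji, if_pos hji1, hji1]
      norm_num
    · rw [if_neg hji1, if_neg hji, if_neg hji1]
      norm_num

lemma sB_n_apply_E (n j : ℕ) (hn : 1 ≤ n) (hj1 : 1 ≤ j) (hj : j ≤ n) :
    sB n n (E n j) = if j = n then -E n n else E n j := by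
  have hb : alphaB n n = E n n := by rw [alphaB, if_pos rfl]
  have h1 : ⟪alphaB n n, alphaB n n⟫_ℝ = 1 := by
    rw [hb, inner_E n n n hn le_rfl hn le_rfl, if_pos rfl]
  have h2 : ⟪E n j, alphaB n n⟫_ℝ = if j = n then (1:ℝ) else 0 := by
    rw [hb, inner_E n j n hj1 hj hn le_rfl]
  rw [show sB n n = sRefl (alphaB n n) from rfl, sRefl_apply, h1, h2, hb]
  by_cases h : j = n
  · rw [if_pos h, if_pos h, h]
    norm_num
    module
  · rw [if_neg h, if_neg h]
    norm_num

noncomputable def QB (n m : ℕ) : Equiv.Perm (EuclideanSpace ℝ (Fin n)) :=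
  ((List.range m).map fun k => sB n (k + 1)).prod

noncomputable def PB (n m : ℕ) : Equiv.Perm (EuclideanSpace ℝ (Fin n)) :=
  ((List.range m).map fun k => sB n (k + 2)).prod

lemma QB_succ (n m : ℕ) (x : EuclideanSpace ℝ (Fin n)) :
    QB n (m + 1) x = QB n m (sB n (m + 1) x) := by
  rw [QB, List.range_succ, List.map_append, List.prod_append]
  simp [QB, Equiv.Perm.mul_apply]

lemma PB_succ (n m : ℕ) (x : EuclideanSpace ℝ (Fin n)) :
    PB n (m + 1) x = PB n m (sB n (m + 2) x) := by
  rw [PB, List.range_succ, List.map_append, List.prod_append]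
  simp [PB, Equiv.Perm.mul_apply]

lemma QB_lem (n : ℕ) : ∀ m, m + 2 ≤ n → QB n m (E n (m + 1) - E n n) = E n 1 - E n n := by
  intro m
  induction m with
  | zero => intro _; simp [QB]
  | succ m ih =>
    intro hm
    rw [QB_succ, sB_sub, show m + 1 + 1 = m + 2 by omega,
      sB_apply_E n (m+1) (m+2) (by omega) (by omega) (by omega) (by omega),
      sB_apply_E n (m+1) n (by omega) (by omega) (by omega) le_rfl,
      if_neg (by omega), if_pos rfl, if_neg (by omega), if_neg (by omega)]
    exact ih (by omega)

lemma PB_lem (n : ℕ) (hn : 2 ≤ n) :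
    ∀ m, m + 2 ≤ n → PB n m (E n 1 + E n (m + 2)) = E n 1 + E n 2 := by
  intro m
  induction m with
  | zero => intro _; simp [PB]
  | succ m ih =>
    intro hm
    rw [PB_succ, sB_add, show m + 1 + 2 = m + 3 by omega,
      sB_apply_E n (m+2) 1 (by omega) (by omega) (by omega) (by omega),
      sB_apply_E n (m+2) (m+3) (by omega) (by omega) (by omega) (by omega),
      if_neg (by omega), if_neg (by omega), if_neg (by omega), if_pos (by omega)]
    exact ih (by omega)

/-- Type `Bₙ` (`n ≥ 2`): for `v = s₂ ∘ ⋯ ∘ sₙ ∘ s₁ ∘ ⋯ ∘ sₙ₋₁` one has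
`v⁻¹(α₀) = -αₙ₋₁`, where `α₀ = e₁ + e₂` is the highest root. -/
theorem stmt_6 (n : ℕ) (hn : 2 ≤ n) :
    (vB n)⁻¹ (E n 1 + E n 2) = -alphaB n (n - 1) := by
  obtain ⟨m, rfl⟩ : ∃ m, n = m + 2 := ⟨n - 2, by omega⟩
  have h1 : m + 2 - 1 = m + 1 := by omega
  have hv : ∀ x, vB (m+2) x = PB (m+2) (m+1) (QB (m+2) (m+1) x) := by
    intro x
    rw [vB, h1, List.prod_append]
    simp [PB, QB, Equiv.Perm.mul_apply]
  have hQ : QB (m+2) (m+1) (E (m+2) (m+2) - E (m+2) (m+1)) = E (m+2) 1 - E (m+2) (m+2) := by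
    rw [QB_succ, sB_sub,
      sB_apply_E (m+2) (m+1) (m+2) (by omega) (by omega) (by omega) le_rfl,
      sB_apply_E (m+2) (m+1) (m+1) (by omega) (by omega) (by omega) (by omega),
      if_neg (by omega), if_pos (by omega), if_pos rfl,
      show m + 1 + 1 = m + 2 by omega]
    exact QB_lem (m+2) m le_rfl
  have hP : PB (m+2) (m+1) (E (m+2) 1 - E (m+2) (m+2)) = E (m+2) 1 + E (m+2) 2 := by
    rw [PB_succ, sB_sub,
      sB_n_apply_E (m+2) 1 (by omega) (by omega) (by omega),
      sB_n_apply_E (m+2) (m+2) (by omega) (by omega) le_rfl,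
      if_neg (by omega), if_pos rfl, sub_neg_eq_add]
    exact PB_lem (m+2) (by omega) m le_rfl
  have key : vB (m+2) (E (m+2) (m+2) - E (m+2) (m+1)) = E (m+2) 1 + E (m+2) 2 := by
    rw [hv, hQ, hP]
  rw [← key, Equiv.Perm.inv_def, Equiv.symm_apply_apply, alphaB, if_neg (by omega : m + 2 - 1 ≠ m + 2), h1,
    neg_sub, show m + 1 + 1 = m + 2 by omega]
end

section
/- Let v = s_2 ∘ s_3 ∘ ⋯ ∘ s_n ∘ s_1 ∘ s_2 ∘ ⋯ ∘ s_{n−1} (composition of reflections, rightmost factor applied first), and let u be an element of the subgroup of the orthogonal group of ℝ^n generated by {s_j : j ≠ 2} such that u(α_j) is a negative root for every j ≠ 2. Then v(α_n) = α_1 + α_2 + ⋯ + α_n and u(v(α_n)) = α_2 + α_3 + ⋯ + α_n. -/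
open scoped InnerProductSpace

section Aux
open scoped InnerProductSpace

private lemma inner_E_E (n i j : ℕ) (hi1 : 1 ≤ i) (hi2 : i ≤ n) (hj1 : 1 ≤ j) (hj2 : j ≤ n) :
    ⟪E n i, E n j⟫_ℝ = if i = j then 1 else 0 := by
  rw [E, E, dif_pos ⟨hi1, hi2⟩, dif_pos ⟨hj1, hj2⟩]
  simp only [EuclideanSpace.inner_single_left, EuclideanSpace.single_apply, Fin.ext_iff,
    map_one, one_mul]
  split_ifs with h h' h' <;> first | rfl | omega

private lemma alphaB_lt (n i : ℕ) (h : i ≠ n) : alphaB n i = E n i - E n (i + 1) := if_neg h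

private lemma alphaB_top (n : ℕ) : alphaB n n = E n n := if_pos rfl

private lemma inner_E_alpha (n i j : ℕ) (hi1 : 1 ≤ i) (hi2 : i ≤ n) (hj1 : 1 ≤ j) (hj2 : j ≤ n) :
    ⟪E n i, alphaB n j⟫_ℝ =
      (if i = j then 1 else 0) - (if i = j + 1 ∧ j < n then 1 else 0) := by
  rcases eq_or_ne j n with heq | hne
  · rw [heq, alphaB_top, inner_E_E n i n hi1 hi2 (by omega) le_rfl]
    have : ¬ n < n := lt_irrefl n
    simp [this, heq]
  · rw [alphaB_lt n j hne, inner_sub_right, inner_E_E n i j hi1 hi2 hj1 hj2,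
      inner_E_E n i (j+1) hi1 hi2 (by omega) (by omega)]
    have : j < n := by omega
    simp [this]

private lemma inner_alpha_self (n j : ℕ) (hj1 : 1 ≤ j) (hj2 : j ≤ n) :
    ⟪alphaB n j, alphaB n j⟫_ℝ = if j = n then 1 else 2 := by
  rcases eq_or_ne j n with heq | hne
  · rw [heq]
    nth_rewrite 1 [alphaB_top]
    rw [inner_E_alpha n n n (by omega) le_rfl (by omega) le_rfl]
    have : ¬ n < n := lt_irrefl n
    simp [this]
  · have hjn : j < n := by omega
    nth_rewrite 1 [alphaB_lt n j hne]
    rw [inner_sub_left, inner_E_alpha n j j hj1 hj2 hj1 hj2,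
      inner_E_alpha n (j+1) j (by omega) (by omega) hj1 hj2]
    simp [hne, hjn]
    norm_num

private lemma sB_apply (n i : ℕ) (x : EuclideanSpace ℝ (Fin n)) :
    sB n i x = x - (2 * ⟪x, alphaB n i⟫_ℝ / ⟪alphaB n i, alphaB n i⟫_ℝ) • alphaB n i := rfl

private lemma sB_fix (n i : ℕ) (x : EuclideanSpace ℝ (Fin n)) (h : ⟪x, alphaB n i⟫_ℝ = 0) :
    sB n i x = x := by
  simp [sB_apply, h]

/-- `s_m (e_{m+1}) = e_m` for `1 ≤ m < n`. -/
private lemma sB_step (n m : ℕ) (h1 : 1 ≤ m) (h2 : m + 1 ≤ n) :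
    sB n m (E n (m + 1)) = E n m := by
  have hne : m ≠ n := by omega
  have hlt : m < n := by omega
  rw [sB_apply, inner_E_alpha n (m+1) m (by omega) (by omega) h1 (by omega),
    inner_alpha_self n m h1 (by omega), if_neg hne, if_neg (by omega),
    if_pos ⟨rfl, hlt⟩, alphaB_lt n m hne]
  norm_num

/-- `s_j` fixes `e_1` for `2 ≤ j ≤ n`. -/
private lemma sB_fix_E1 (n j : ℕ) (h1 : 2 ≤ j) (h2 : j ≤ n) :
    sB n j (E n 1) = E n 1 := by
  apply sB_fix
  rw [inner_E_alpha n 1 j (by omega) (by omega) (by omega) h2]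
  simp only [if_neg (by omega : ¬ (1:ℕ) = j)]
  rw [if_neg (by omega)]
  norm_num

/-- `s_j` fixes `e_2` for `3 ≤ j ≤ n`. -/
private lemma sB_fix_E2 (n j : ℕ) (h1 : 3 ≤ j) (h2 : j ≤ n) :
    sB n j (E n 2) = E n 2 := by
  apply sB_fix
  rw [inner_E_alpha n 2 j (by omega) (by omega) (by omega) h2]
  rw [if_neg (by omega), if_neg (by omega)]
  norm_num

private lemma inner_alpha1 (n : ℕ) (hn : 2 ≤ n) (x : EuclideanSpace ℝ (Fin n))
    (h1 : ⟪x, alphaB n 1⟫_ℝ = 0) : True := trivial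

private lemma sB1_E1 (n : ℕ) (hn : 2 ≤ n) : sB n 1 (E n 1) = E n 2 := by
  have hne : (1:ℕ) ≠ n := by omega
  rw [sB_apply, inner_E_alpha n 1 1 le_rfl (by omega) le_rfl (by omega),
    inner_alpha_self n 1 le_rfl (by omega), if_neg hne, if_pos rfl, if_neg (by omega),
    alphaB_lt n 1 hne]
  norm_num

private lemma sB1_E2 (n : ℕ) (hn : 2 ≤ n) : sB n 1 (E n 2) = E n 1 := by
  have hne : (1:ℕ) ≠ n := by omega
  rw [sB_apply, inner_E_alpha n 2 1 (by omega) hn le_rfl (by omega),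
    inner_alpha_self n 1 le_rfl (by omega), if_neg (by omega), if_pos ⟨rfl, by omega⟩,
    if_neg hne, alphaB_lt n 1 hne]
  norm_num

private lemma sB1_alpha1 (n : ℕ) (hn : 2 ≤ n) : sB n 1 (alphaB n 1) = -alphaB n 1 := by
  rw [sB_apply, inner_alpha_self n 1 le_rfl (by omega), if_neg (by omega)]
  norm_num
  module

private lemma sB1_neg_alpha1 (n : ℕ) (hn : 2 ≤ n) : sB n 1 (-alphaB n 1) = alphaB n 1 := by
  rw [sB_apply, inner_neg_left, inner_alpha_self n 1 le_rfl (by omega), if_neg (by omega)]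
  norm_num
  module

private lemma inner_alpha1_alphaj (n j : ℕ) (hn : 2 ≤ n) (h1 : 3 ≤ j) (h2 : j ≤ n) :
    ⟪alphaB n 1, alphaB n j⟫_ℝ = 0 := by
  rw [alphaB_lt n 1 (by omega), inner_sub_left,
    inner_E_alpha n 1 j (by omega) (by omega) (by omega) h2,
    inner_E_alpha n 2 j (by omega) (by omega) (by omega) h2]
  rw [if_neg (by omega), if_neg (by omega), if_neg (by omega), if_neg (by omega)]
  norm_num

private lemma list_prod_fix {V : Type*} (l : List (Equiv.Perm V)) (x : V)
    (h : ∀ f ∈ l, f x = x) : l.prod x = x := by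
  induction l with
  | nil => simp
  | cons f l ih =>
    rw [List.prod_cons, Equiv.Perm.mul_apply, ih (fun g hg => h g (List.mem_cons_of_mem _ hg)),
      h f List.mem_cons_self]

private lemma sum_alpha (n : ℕ) : ∀ d m : ℕ, 1 ≤ m → m + d = n →
    ∑ k ∈ Finset.Icc m n, alphaB n k = E n m := by
  intro d
  induction d with
  | zero =>
    intro m hm hmn
    have h : m = n := by omega
    subst h
    rw [Finset.Icc_self, Finset.sum_singleton, alphaB_top]
  | succ d ih =>
    intro m hm hmn
    have hmlt : m < n := by omega
    rw [← Finset.Ioc_insert_left (by omega : m ≤ n), Finset.sum_insert (by simp),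
      ← Finset.Icc_add_one_left_eq_Ioc, ih (m+1) (by omega) (by omega), alphaB_lt n m (by omega)]
    module

end Aux

/-- Type `Bₙ` (`n ≥ 2`): let `v = s₂ ∘ ⋯ ∘ sₙ ∘ s₁ ∘ ⋯ ∘ sₙ₋₁` and let `u` be the longest
element of the parabolic Weyl group generated by `{sⱼ : j ≠ 2}`.  Then
`v(αₙ) = α₁ + ⋯ + αₙ` and `u(v(αₙ)) = α₂ + ⋯ + αₙ`. -/
theorem stmt_8 (n : ℕ) (hn : 2 ≤ n)
    (u : Equiv.Perm (EuclideanSpace ℝ (Fin n)))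
    (hu : u ∈ Subgroup.closure {g | ∃ j, 1 ≤ j ∧ j ≤ n ∧ j ≠ 2 ∧ g = sB n j})
    (hneg : ∀ j, 1 ≤ j → j ≤ n → j ≠ 2 → IsNegB n (u (alphaB n j))) :
    vB n (alphaB n n) = ∑ k ∈ Finset.Icc 1 n, alphaB n k ∧
    u (vB n (alphaB n n)) = ∑ k ∈ Finset.Icc 2 n, alphaB n k := by
  have hE1 : ∑ k ∈ Finset.Icc 1 n, alphaB n k = E n 1 := sum_alpha n (n-1) 1 le_rfl (by omega)
  have hE2 : ∑ k ∈ Finset.Icc 2 n, alphaB n k = E n 2 := sum_alpha n (n-2) 2 (by omega) (by omega)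
  -- Part 1 : v(αₙ) = e₁
  have hv : vB n (alphaB n n) = E n 1 := by
    have hB : ∀ m : ℕ, m + 1 ≤ n →
        (((List.range m).map fun k => sB n (k + 1)).prod) (E n (m + 1)) = E n 1 := by
      intro m
      induction m with
      | zero => intro _; simp
      | succ m ih =>
        intro h
        rw [List.range_succ, List.map_append, List.prod_append, Equiv.Perm.mul_apply]
        simp only [List.map_cons, List.map_nil, List.prod_cons, List.prod_nil, mul_one]
        rw [sB_step n (m + 1) (by omega) (by omega)]
        exact ih (by omega)
    have hA : (((List.range (n - 1)).map fun k => sB n (k + 2)).prod) (E n 1) = E n 1 := by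
      apply list_prod_fix
      intro f hf
      simp only [List.mem_map, List.mem_range] at hf
      obtain ⟨k, hk, rfl⟩ := hf
      exact sB_fix_E1 n (k + 2) (by omega) (by omega)
    have hB' := hB (n - 1) (by omega)
    rw [show n - 1 + 1 = n from by omega] at hB'
    rw [vB, alphaB_top, List.prod_append, Equiv.Perm.mul_apply, hB', hA]
  -- Part 2 : the invariant under the parabolic subgroup
  have hP : (u (E n 1) = E n 1 ∧ u (E n 2) = E n 2 ∧
        u (alphaB n 1) = alphaB n 1 ∧ u (-alphaB n 1) = -alphaB n 1) ∨
      (u (E n 1) = E n 2 ∧ u (E n 2) = E n 1 ∧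
        u (alphaB n 1) = -alphaB n 1 ∧ u (-alphaB n 1) = alphaB n 1) := by
    refine Subgroup.closure_induction ?_ ?_ ?_ ?_ hu
    · rintro x ⟨j, hj1, hj2, hj3, rfl⟩
      rcases eq_or_ne j 1 with rfl | hj4
      · right
        exact ⟨sB1_E1 n hn, sB1_E2 n hn, sB1_alpha1 n hn, sB1_neg_alpha1 n hn⟩
      · left
        have h3 : 3 ≤ j := by omega
        refine ⟨sB_fix_E1 n j (by omega) hj2, sB_fix_E2 n j h3 hj2,
          sB_fix n j _ (inner_alpha1_alphaj n j hn h3 hj2),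
          sB_fix n j _ (by rw [inner_neg_left, inner_alpha1_alphaj n j hn h3 hj2, neg_zero])⟩
    · left; simp
    · rintro x y _ _ (⟨h1, h2, h3, h4⟩ | ⟨h1, h2, h3, h4⟩) (⟨g1, g2, g3, g4⟩ | ⟨g1, g2, g3, g4⟩) <;>
        [left; right; right; left] <;>
        refine ⟨?_, ?_, ?_, ?_⟩ <;>
        simp only [Equiv.Perm.mul_apply, g1, g2, g3, g4, h1, h2, h3, h4]
    · rintro x _ (⟨h1, h2, h3, h4⟩ | ⟨h1, h2, h3, h4⟩)
      · exact Or.inl ⟨by rw [Equiv.Perm.inv_eq_iff_eq]; exact h1.symm,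
          by rw [Equiv.Perm.inv_eq_iff_eq]; exact h2.symm,
          by rw [Equiv.Perm.inv_eq_iff_eq]; exact h3.symm,
          by rw [Equiv.Perm.inv_eq_iff_eq]; exact h4.symm⟩
      · exact Or.inr ⟨by rw [Equiv.Perm.inv_eq_iff_eq]; exact h2.symm,
          by rw [Equiv.Perm.inv_eq_iff_eq]; exact h1.symm,
          by rw [Equiv.Perm.inv_eq_iff_eq]; exact h4.symm,
          by rw [Equiv.Perm.inv_eq_iff_eq]; exact h3.symm⟩
  -- `u(α₁)` is a negative root, hence `u` swaps `e₁` and `e₂`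
  have hu1 : u (E n 1) = E n 2 := by
    have hia : ⟪alphaB n 1, E n 1⟫_ℝ = 1 := by
      rw [real_inner_comm, inner_E_alpha n 1 1 le_rfl (by omega) le_rfl (by omega),
        if_pos rfl, if_neg (by omega)]
      norm_num
    rcases hP with ⟨h1, h2, h3, h4⟩ | ⟨h1, _, _, _⟩
    · exfalso
      have hna := hneg 1 le_rfl (by omega) (by omega)
      rw [IsNegB, IsPosB, h3] at hna
      obtain ⟨-, c, hc⟩ := hna
      have hinner := congrArg (fun x => ⟪x, E n 1⟫_ℝ) hc
      simp only [inner_neg_left, sum_inner, hia] at hinner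
      have hterm : ∀ i ∈ Finset.Icc 1 n, ⟪(c i : ℝ) • alphaB n i, E n 1⟫_ℝ
          = if i = 1 then (c i : ℝ) else 0 := by
        intro i hi
        simp only [Finset.mem_Icc] at hi
        rw [real_inner_smul_left, real_inner_comm,
          inner_E_alpha n 1 i le_rfl (by omega) hi.1 hi.2]
        rcases eq_or_ne i 1 with rfl | hne
        · rw [if_pos rfl, if_pos rfl, if_neg (by omega)]; ring
        · rw [if_neg hne, if_neg (fun h => hne h.symm), if_neg (by omega)]; ring
      rw [Finset.sum_congr rfl hterm, Finset.sum_ite_eq' (Finset.Icc 1 n) 1,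
        if_pos (by simp [Finset.mem_Icc]; omega)] at hinner
      have : (0 : ℝ) ≤ (c 1 : ℝ) := Nat.cast_nonneg _
      rw [← hinner] at this
      norm_num at this
    · exact h1
  exact ⟨by rw [hv, hE1], by rw [hv, hu1, hE2]⟩
end
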